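/- arXiv:2205.04636 — 4 statements merged into one kernel-verified Lean document; each statement's English description precedes it below -/
import Mathlib

section
/- Extreme sets form a laminar family: if X and Y are both extreme sets of a weighted undirected graph, then X ∩ Y = ∅, or X ⊆ Y, or Y ⊆ X. Equivalently, it is impossible that X \ Y, Y \ X, and X ∩ Y are all nonempty. -/
/-! Posimodularity of the cut function, `δ(X \ Y) + δ(Y \ X) ≤ δ(X) + δ(Y)`: by symmetry of `w`,
`2 δ(X)` is the total weight of the ordered pairs separated by `X`, and every pair separated by one
of `X \ Y`, `Y \ X` is separated by at least as many of `X`, `Y`. Applied to two crossing extreme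
sets `X` and `Y`, the nonempty proper subsets `X \ Y ⊂ X` and `Y \ X ⊂ Y` would make the left side
strictly larger than the right. -/

open Finset

/-- The cut value of a set `X` in a weighted undirected graph on vertex set `V`
with edge-weight function `w`: the total weight of edges with exactly one
endpoint in `X`. -/
def cutVal {V : Type*} [Fintype V] [DecidableEq V] (w : V → V → ℝ) (X : Finset V) : ℝ :=
  ∑ u ∈ X, ∑ v ∈ Xᶜ, w u v

/-- A nonempty proper subset `X ⊊ V` is extreme if every nonempty proper subset
`Y ⊊ X` satisfies `δ(Y) > δ(X)`. -/
def IsExtremeSet {V : Type*} [Fintype V] [DecidableEq V] (w : V → V → ℝ) (X : Finset V) : Prop :=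
  X.Nonempty ∧ X ≠ Finset.univ ∧
    ∀ Y : Finset V, Y.Nonempty → Y ⊂ X → cutVal w Y > cutVal w X

section CutVal

variable {V : Type*} [Fintype V] [DecidableEq V] (w : V → V → ℝ)

lemma cutVal_eq_sum_ite (X : Finset V) :
    cutVal w X = ∑ u, ∑ v, if u ∈ X ∧ v ∉ X then w u v else 0 := by
  simp only [cutVal, ite_and, sum_ite_irrel, sum_const_zero, sum_ite_mem, univ_inter, ← mem_compl]

lemma two_mul_cutVal_eq_sum_ite_not_iff (hsymm : ∀ u v, w u v = w v u) (X : Finset V) :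
    2 * cutVal w X = ∑ u, ∑ v, if ¬(u ∈ X ↔ v ∈ X) then w u v else 0 := by
  have hreverse : cutVal w X = ∑ u, ∑ v, if v ∈ X ∧ u ∉ X then w u v else 0 := by
    rw [cutVal_eq_sum_ite, sum_comm]
    simp only [hsymm]
  rw [two_mul]
  nth_rw 1 [cutVal_eq_sum_ite]
  rw [hreverse, ← sum_add_distrib]
  refine sum_congr rfl fun u _ ↦ ?_
  rw [← sum_add_distrib]
  refine sum_congr rfl fun v _ ↦ ?_
  by_cases hu : u ∈ X <;> by_cases hv : v ∈ X <;> simp [hu, hv]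

lemma cutVal_sdiff_add_cutVal_sdiff_le (hsymm : ∀ u v, w u v = w v u)
    (hnonneg : ∀ u v, 0 ≤ w u v) (X Y : Finset V) :
    cutVal w (X \ Y) + cutVal w (Y \ X) ≤ cutVal w X + cutVal w Y := by
  suffices 2 * cutVal w (X \ Y) + 2 * cutVal w (Y \ X) ≤ 2 * cutVal w X + 2 * cutVal w Y by
    linarith
  simp only [two_mul_cutVal_eq_sum_ite_not_iff w hsymm, ← sum_add_distrib]
  refine sum_le_sum fun u _ ↦ sum_le_sum fun v _ ↦ ?_
  by_cases huX : u ∈ X <;> by_cases huY : u ∈ Y <;> by_cases hvX : v ∈ X <;>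
    by_cases hvY : v ∈ Y <;> simp [huX, huY, hvX, hvY, hnonneg u v]

variable {w} in
lemma IsExtremeSet.cutVal_lt_cutVal_sdiff {X Y : Finset V} (hX : IsExtremeSet w X)
    (hXY : (X ∩ Y).Nonempty) (hsub : ¬X ⊆ Y) : cutVal w X < cutVal w (X \ Y) := by
  refine hX.2.2 _ (sdiff_nonempty.2 hsub) ?_
  rw [← sdiff_inter_self_left]
  exact sdiff_ssubset inter_subset_left hXY

end CutVal

theorem extreme_sets_laminar_general {V : Type*} [Fintype V] [DecidableEq V] (w : V → V → ℝ)
    (hsymm : ∀ u v, w u v = w v u) (hnonneg : ∀ u v, 0 ≤ w u v)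
    (X Y : Finset V) (hX : IsExtremeSet w X) (hY : IsExtremeSet w Y) :
    X ∩ Y = ∅ ∨ X ⊆ Y ∨ Y ⊆ X := by
  rw [or_iff_not_imp_left, ← ne_eq, ← nonempty_iff_ne_empty]
  intro hXY
  by_contra! hcross
  have hXlt := hX.cutVal_lt_cutVal_sdiff hXY hcross.1
  have hYlt := hY.cutVal_lt_cutVal_sdiff (inter_comm X Y ▸ hXY) hcross.2
  have := cutVal_sdiff_add_cutVal_sdiff_le w hsymm hnonneg X Y
  linarith

theorem extreme_sets_laminar {V : Type*} [Fintype V] [DecidableEq V] (w : V → V → ℝ)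
    (hsymm : ∀ u v, w u v = w v u) (hnonneg : ∀ u v, 0 ≤ w u v)
    (hdiag : ∀ v, w v v = 0)
    (X Y : Finset V) (hX : IsExtremeSet w X) (hY : IsExtremeSet w Y) :
    X ∩ Y = ∅ ∨ X ⊆ Y ∨ Y ⊆ X :=
  extreme_sets_laminar_general w hsymm hnonneg X Y hX hY
end

section
/- A strong extreme set cannot be separated by a weak extreme set: if X and X' are extreme sets with δ(X) < δ(X'), then X is not a proper subset of X'; consequently, either X ∩ X' = ∅ or X' ⊆ X. -/
open Finset

/-- Indicator of the ordered pair `(u,v)` crossing out of `X`. -/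
def ind {V : Type*} [DecidableEq V] (X : Finset V) (u v : V) : ℝ :=
  if u ∈ X ∧ v ∉ X then 1 else 0

lemma cutVal_eq {V : Type*} [Fintype V] [DecidableEq V] (w : V → V → ℝ) (X : Finset V) :
    cutVal w X = ∑ u ∈ univ, ∑ v ∈ univ, w u v * ind X u v := by
  unfold cutVal ind
  simp only [mul_ite, mul_one, mul_zero]
  have h : ∀ u, (∑ v ∈ univ, if u ∈ X ∧ v ∉ X then w u v else 0) =
      if u ∈ X then ∑ v ∈ Xᶜ, w u v else 0 := by
    intro u
    by_cases h : u ∈ X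
    · simp only [h, true_and, if_true, ← Finset.mem_compl]
      rw [Finset.sum_ite_mem, Finset.univ_inter]
    · simp [h]
  simp only [h]
  rw [Finset.sum_ite_mem, Finset.univ_inter]

lemma ind_ineq {V : Type*} [DecidableEq V] (X X' : Finset V) (u v : V) :
    ind (X \ X') u v + ind (X' \ X) u v + (ind (X \ X') v u + ind (X' \ X) v u)
      ≤ ind X u v + ind X' u v + (ind X v u + ind X' v u) := by
  unfold ind
  by_cases h1 : u ∈ X <;> by_cases h2 : u ∈ X' <;> by_cases h3 : v ∈ X <;> by_cases h4 : v ∈ X' <;>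
    simp [Finset.mem_sdiff, h1, h2, h3, h4]

/-- Posimodularity of the cut function. -/
lemma posimodular {V : Type*} [Fintype V] [DecidableEq V] (w : V → V → ℝ)
    (hsymm : ∀ u v, w u v = w v u) (hnonneg : ∀ u v, 0 ≤ w u v) (X X' : Finset V) :
    cutVal w (X \ X') + cutVal w (X' \ X) ≤ cutVal w X + cutVal w X' := by
  have key : ∀ (A B : Finset V), cutVal w A + cutVal w B =
      ∑ u ∈ univ, ∑ v ∈ univ, w u v * (ind A u v + ind B u v) := by
    intro A B
    rw [cutVal_eq, cutVal_eq, ← Finset.sum_add_distrib]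
    refine Finset.sum_congr rfl fun u _ => ?_
    rw [← Finset.sum_add_distrib]
    refine Finset.sum_congr rfl fun v _ => ?_
    ring
  have swap : ∀ (A B : Finset V),
      (∑ u ∈ univ, ∑ v ∈ univ, w u v * (ind A u v + ind B u v)) =
      ∑ u ∈ univ, ∑ v ∈ univ, w u v * (ind A v u + ind B v u) := by
    intro A B
    rw [Finset.sum_comm]
    refine Finset.sum_congr rfl fun u _ => Finset.sum_congr rfl fun v _ => ?_
    rw [hsymm u v]
  have two_eq : ∀ (A B : Finset V), 2 * (cutVal w A + cutVal w B) =
      ∑ u ∈ univ, ∑ v ∈ univ,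
        w u v * (ind A u v + ind B u v + (ind A v u + ind B v u)) := by
    intro A B
    rw [two_mul]
    nth_rewrite 2 [(key A B).trans (swap A B)]
    rw [key A B, ← Finset.sum_add_distrib]
    refine Finset.sum_congr rfl fun u _ => ?_
    rw [← Finset.sum_add_distrib]
    refine Finset.sum_congr rfl fun v _ => ?_
    ring
  have hle : 2 * (cutVal w (X \ X') + cutVal w (X' \ X)) ≤ 2 * (cutVal w X + cutVal w X') := by
    rw [two_eq, two_eq]
    refine Finset.sum_le_sum fun u _ => Finset.sum_le_sum fun v _ => ?_
    exact mul_le_mul_of_nonneg_left (ind_ineq X X' u v) (hnonneg u v)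
  linarith

theorem strong_extreme_not_separated {V : Type*} [Fintype V] [DecidableEq V] (w : V → V → ℝ)
    (hsymm : ∀ u v, w u v = w v u) (hnonneg : ∀ u v, 0 ≤ w u v)
    (hdiag : ∀ v, w v v = 0)
    (X X' : Finset V) (hX : IsExtremeSet w X) (hX' : IsExtremeSet w X')
    (hlt : cutVal w X < cutVal w X') :
    ¬ X ⊂ X' ∧ (X ∩ X' = ∅ ∨ X' ⊆ X) := by
  have hnotss : ¬ X ⊂ X' := by
    intro h
    have := hX'.2.2 X hX.1 h
    linarith
  refine ⟨hnotss, ?_⟩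
  by_cases hint : X ∩ X' = ∅
  · exact Or.inl hint
  right
  -- X ∩ X' is nonempty
  obtain ⟨a, ha⟩ := Finset.nonempty_of_ne_empty hint
  rw [Finset.mem_inter] at ha
  by_contra hns
  -- X' \ X is nonempty
  obtain ⟨b, hb⟩ := Finset.not_subset.mp hns
  by_cases hXX' : (X \ X').Nonempty
  · -- crossing case: contradiction with posimodularity
    have h1 : X \ X' ⊂ X := by
      refine Finset.ssubset_iff_of_subset (Finset.sdiff_subset) |>.mpr ⟨a, ha.1, ?_⟩
      simp [Finset.mem_sdiff, ha.2]
    have h2 : X' \ X ⊂ X' := by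
      refine Finset.ssubset_iff_of_subset (Finset.sdiff_subset) |>.mpr ⟨a, ha.2, ?_⟩
      simp [Finset.mem_sdiff, ha.1]
    have e1 := hX.2.2 (X \ X') hXX' h1
    have e2 := hX'.2.2 (X' \ X) ⟨b, Finset.mem_sdiff.mpr hb⟩ h2
    have := posimodular w hsymm hnonneg X X'
    linarith
  · -- X ⊆ X', so X ⊂ X' (since b ∈ X' \ X), contradicting hnotss
    have hsub : X ⊆ X' := by
      intro x hx
      by_contra hx'
      exact hXX' ⟨x, Finset.mem_sdiff.mpr ⟨hx, hx'⟩⟩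
    exact hnotss (Finset.ssubset_iff_of_subset hsub |>.mpr ⟨b, hb.1, hb.2⟩)
end

section
/- Partner condition for extreme unions: let X and Y be disjoint nonempty subsets of V such that X ∪ Y is an extreme set. Then w(X,Y) > (1/2)·δ(X) and w(X,Y) > (1/2)·δ(Y); equivalently δ(Y) > δ(X ∪ Y) and δ(X) > δ(X ∪ Y). -/
open Finset

/-- The total weight of edges between the (disjoint) sets `X` and `Y`. -/
def wSets {V : Type*} [Fintype V] [DecidableEq V] (w : V → V → ℝ) (X Y : Finset V) : ℝ :=
  ∑ u ∈ X, ∑ v ∈ Y, w u v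

theorem partner_condition {V : Type*} [Fintype V] [DecidableEq V] (w : V → V → ℝ)
    (hsymm : ∀ u v, w u v = w v u) (hnonneg : ∀ u v, 0 ≤ w u v)
    (hdiag : ∀ v, w v v = 0)
    (X Y : Finset V) (hXne : X.Nonempty) (hYne : Y.Nonempty) (hdisj : Disjoint X Y)
    (hext : IsExtremeSet w (X ∪ Y)) :
    wSets w X Y > (1 / 2) * cutVal w X ∧ wSets w X Y > (1 / 2) * cutVal w Y ∧
      cutVal w Y > cutVal w (X ∪ Y) ∧ cutVal w X > cutVal w (X ∪ Y) := by
  obtain ⟨-, -, hmin⟩ := hext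
  set C : Finset V := (X ∪ Y)ᶜ with hC
  have hwsymm : ∀ A B : Finset V, wSets w A B = wSets w B A := by
    intro A B
    unfold wSets
    rw [Finset.sum_comm]
    exact Finset.sum_congr rfl fun u _ => Finset.sum_congr rfl fun v _ => hsymm v u
  have hXc : Xᶜ = Y ∪ C := by
    ext v
    simp only [hC, Finset.mem_compl, Finset.mem_union]
    constructor
    · intro hv
      by_cases hy : v ∈ Y
      · exact Or.inl hy
      · exact Or.inr (by tauto)
    · rintro (hy | hc)
      · exact fun hx => Finset.disjoint_left.mp hdisj hx hy
      · intro hx; exact (by tauto : ¬(v ∈ X ∨ v ∈ Y)) (Or.inl hx)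
  have hYc : Yᶜ = X ∪ C := by
    ext v
    simp only [hC, Finset.mem_compl, Finset.mem_union]
    constructor
    · intro hv
      by_cases hx : v ∈ X
      · exact Or.inl hx
      · exact Or.inr (by tauto)
    · rintro (hx | hc)
      · exact fun hy => Finset.disjoint_left.mp hdisj hx hy
      · intro hy; exact (by tauto : ¬(v ∈ X ∨ v ∈ Y)) (Or.inr hy)
  have hYCdisj : Disjoint Y C := by
    rw [hC]; exact Disjoint.mono_left Finset.subset_union_right disjoint_compl_right
  have hXCdisj : Disjoint X C := by
    rw [hC]; exact Disjoint.mono_left Finset.subset_union_left disjoint_compl_right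
  have hcutX : cutVal w X = wSets w X Y + wSets w X C := by
    unfold cutVal wSets
    rw [hXc, ← Finset.sum_add_distrib]
    exact Finset.sum_congr rfl fun u _ => Finset.sum_union hYCdisj
  have hcutY : cutVal w Y = wSets w Y X + wSets w Y C := by
    unfold cutVal wSets
    rw [hYc, ← Finset.sum_add_distrib]
    exact Finset.sum_congr rfl fun u _ => Finset.sum_union hXCdisj
  have hcutU : cutVal w (X ∪ Y) = wSets w X C + wSets w Y C := by
    unfold cutVal wSets
    rw [Finset.sum_union hdisj]
  have hXY : cutVal w X > cutVal w (X ∪ Y) := by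
    apply hmin X hXne
    exact Finset.ssubset_iff_of_subset Finset.subset_union_left |>.mpr
      ⟨hYne.choose, Finset.mem_union_right _ hYne.choose_spec,
        fun hx => Finset.disjoint_left.mp hdisj hx hYne.choose_spec⟩
  have hYY : cutVal w Y > cutVal w (X ∪ Y) := by
    apply hmin Y hYne
    exact Finset.ssubset_iff_of_subset Finset.subset_union_right |>.mpr
      ⟨hXne.choose, Finset.mem_union_left _ hXne.choose_spec,
        fun hy => Finset.disjoint_left.mp hdisj hXne.choose_spec hy⟩
  have h1 : wSets w X Y > wSets w Y C := by
    have := hXY; rw [hcutX, hcutU] at this; linarith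
  have h2 : wSets w X Y > wSets w X C := by
    have := hYY; rw [hcutY, hcutU, hwsymm Y X] at this; linarith
  refine ⟨?_, ?_, hYY, hXY⟩
  · rw [hcutX]; linarith
  · rw [hcutY, hwsymm Y X]; linarith
end

section
/- No external partner for a proper part of an extreme set: let S be an extreme set, let W be a nonempty proper subset of S, and let P be a nonempty set disjoint from S. Then δ(W ∪ P) > δ(P); in particular it is impossible that δ(W ∪ P) < δ(P). -/
open Finset

theorem no_external_partner {V : Type*} [Fintype V] [DecidableEq V] (w : V → V → ℝ)
    (hsymm : ∀ u v, w u v = w v u) (hnonneg : ∀ u v, 0 ≤ w u v)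
    (hdiag : ∀ v, w v v = 0)
    (S W P : Finset V) (hS : IsExtremeSet w S)
    (hWne : W.Nonempty) (hWS : W ⊂ S)
    (hPne : P.Nonempty) (hPS : Disjoint P S) :
    cutVal w (W ∪ P) > cutVal w P := by
  classical
  obtain ⟨hSne, hSuniv, hext⟩ := hS
  set cw : Finset V → Finset V → ℝ := fun A B => ∑ u ∈ A, ∑ v ∈ B, w u v with hcw
  have cwsymm : ∀ A B, cw A B = cw B A := by
    intro A B
    simp only [hcw]
    rw [Finset.sum_comm]
    exact Finset.sum_congr rfl fun u _ => Finset.sum_congr rfl fun v _ => hsymm v u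
  have splitR : ∀ (A D E : Finset V), Disjoint D E → cw A (D ∪ E) = cw A D + cw A E := by
    intro A D E h
    simp only [hcw, ← Finset.sum_add_distrib]
    exact Finset.sum_congr rfl fun u _ => Finset.sum_union h
  have splitL : ∀ (D E A : Finset V), Disjoint D E → cw (D ∪ E) A = cw D A + cw E A := by
    intro D E A h
    exact Finset.sum_union h
  have cutval_eq : ∀ X : Finset V, cutVal w X = cw X Xᶜ := fun X => rfl
  have hWP : Disjoint W P := (hPS.mono_right hWS.subset).symm
  have hPSc : P ⊆ Sᶜ := fun x hx => Finset.mem_compl.mpr (Finset.disjoint_left.mp hPS hx)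
  -- e1 : δ(W∪P) = δ(W) - cw W P + (δ(P) - cw P W)
  have hWc : Wᶜ = (W ∪ P)ᶜ ∪ P := by
    ext v
    simp only [Finset.mem_compl, Finset.mem_union]
    constructor
    · intro hv
      by_cases hp : v ∈ P
      · exact Or.inr hp
      · exact Or.inl fun h => h.elim hv hp
    · rintro (h | h)
      · exact fun hw => h (Or.inl hw)
      · exact fun hw => (Finset.disjoint_left.mp hWP hw) h
  have hPc : Pᶜ = (W ∪ P)ᶜ ∪ W := by
    ext v
    simp only [Finset.mem_compl, Finset.mem_union]
    constructor
    · intro hv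
      by_cases hw : v ∈ W
      · exact Or.inr hw
      · exact Or.inl fun h => h.elim hw hv
    · rintro (h | h)
      · exact fun hp => h (Or.inr hp)
      · exact fun hp => (Finset.disjoint_left.mp hWP h) hp
  have hdWP : Disjoint (W ∪ P)ᶜ P :=
    Finset.disjoint_left.mpr fun x hx hp => (Finset.mem_compl.mp hx) (Finset.mem_union_right _ hp)
  have hdWW : Disjoint (W ∪ P)ᶜ W :=
    Finset.disjoint_left.mpr fun x hx hp => (Finset.mem_compl.mp hx) (Finset.mem_union_left _ hp)
  have eW : cutVal w W = cw W (W ∪ P)ᶜ + cw W P := by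
    rw [cutval_eq, hWc, splitR _ _ _ hdWP]
  have eP : cutVal w P = cw P (W ∪ P)ᶜ + cw P W := by
    rw [cutval_eq, hPc, splitR _ _ _ hdWW]
  have eWP : cutVal w (W ∪ P) = cw W (W ∪ P)ᶜ + cw P (W ∪ P)ᶜ := by
    rw [cutval_eq]
    exact splitL _ _ _ hWP
  -- decompositions over S
  have hScompl : Wᶜ = (S \ W) ∪ Sᶜ := by
    ext v
    simp only [Finset.mem_compl, Finset.mem_union, Finset.mem_sdiff]
    constructor
    · intro hv
      by_cases hs : v ∈ S
      · exact Or.inl ⟨hs, hv⟩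
      · exact Or.inr hs
    · rintro (⟨_, h⟩ | h)
      · exact h
      · exact fun hw => h (hWS.subset hw)
  have hdSW : Disjoint (S \ W) Sᶜ :=
    Finset.disjoint_left.mpr fun x hx hc => (Finset.mem_compl.mp hc) (Finset.mem_sdiff.mp hx).1
  have eW2 : cutVal w W = cw W (S \ W) + cw W Sᶜ := by
    rw [cutval_eq, hScompl, splitR _ _ _ hdSW]
  have hSWc : (S \ W)ᶜ = W ∪ Sᶜ := by
    ext v
    simp only [Finset.mem_compl, Finset.mem_sdiff, Finset.mem_union]
    constructor
    · intro hv
      by_cases hw : v ∈ W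
      · exact Or.inl hw
      · exact Or.inr fun hs => hv ⟨hs, hw⟩
    · rintro (h | h)
      · exact fun hc => hc.2 h
      · exact fun hc => h hc.1
  have hdWSc : Disjoint W Sᶜ :=
    Finset.disjoint_left.mpr fun x hx hc => (Finset.mem_compl.mp hc) (hWS.subset hx)
  have eSW : cutVal w (S \ W) = cw (S \ W) W + cw (S \ W) Sᶜ := by
    rw [cutval_eq, hSWc, splitR _ _ _ hdWSc]
  have eS : cutVal w S = cw W Sᶜ + cw (S \ W) Sᶜ := by
    rw [cutval_eq, ← splitL _ _ _ Finset.disjoint_sdiff,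
      Finset.union_sdiff_of_subset hWS.subset]
  -- extremeness applied to S \ W
  have hSWne : (S \ W).Nonempty := by
    obtain ⟨x, hxS, hxW⟩ := Finset.exists_of_ssubset hWS
    exact ⟨x, Finset.mem_sdiff.mpr ⟨hxS, hxW⟩⟩
  have hSWsub : S \ W ⊂ S := by
    obtain ⟨x, hxW⟩ := hWne
    refine Finset.ssubset_iff_of_subset Finset.sdiff_subset |>.mpr ⟨x, hWS.subset hxW, ?_⟩
    simp [hxW]
  have hgt : cutVal w (S \ W) > cutVal w S := hext _ hSWne hSWsub
  -- cw W P ≤ cw W Sᶜ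
  have hle : cw W P ≤ cw W Sᶜ := by
    apply Finset.sum_le_sum
    intro u _
    exact Finset.sum_le_sum_of_subset_of_nonneg hPSc fun v _ _ => hnonneg u v
  have hsy : cw P W = cw W P := cwsymm P W
  have hsy2 : cw (S \ W) W = cw W (S \ W) := cwsymm _ _
  linarith
end
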